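/- For a single gene without interaction (n = 1, constant burst frequency k > 0, burst sizes Exp(b), mRNA decay rate d₀ > 0), the Gamma distribution with shape k/d₀ and rate b is stationary for the mRNA marginal: for every smooth compactly supported test function f on (0,∞), ∫₀^∞ [−d₀ y f′(y) + k ∫₀^∞ (f(y+h) − f(y)) b e^{−bh} dh] · γ(y) dy = 0, where γ is the density of Gamma(k/d₀, b). -/

import Mathlib

open Real MeasureTheory Set Filter Topology

/-- auxiliary family of functions `C * y^a * exp(-b y)` -/
noncomputable def gaux (C a b : ℝ) (y : ℝ) : ℝ := C * (y ^ a * Real.exp (-b * y))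

lemma gaux_continuousOn (C a b : ℝ) : ContinuousOn (gaux C a b) (Set.Ioi 0) := by
  intro x hx
  refine ContinuousAt.continuousWithinAt ?_
  exact (continuousAt_const.mul (((Real.continuousAt_rpow_const x a
    (Or.inl (ne_of_gt hx))).mul
    ((Real.continuous_exp.comp (continuous_const.mul continuous_id)).continuousAt))))

lemma gaux_continuous (C a b : ℝ) (ha : 0 ≤ a) : Continuous (gaux C a b) :=
  continuous_const.mul ((Real.continuous_rpow_const ha).mul
    (Real.continuous_exp.comp (continuous_const.mul continuous_id)))

lemma gaux_hasDerivAt (C a b : ℝ) {y : ℝ} (hy : y ≠ 0) :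
    HasDerivAt (gaux C a b)
      (C * (a * y ^ (a - 1) * Real.exp (-b * y) + y ^ a * (Real.exp (-b * y) * -b))) y := by
  have h1 : HasDerivAt (fun x : ℝ => x ^ a) (a * y ^ (a - 1)) y :=
    Real.hasDerivAt_rpow_const (Or.inl hy)
  have h0 : HasDerivAt (fun x : ℝ => -b * x) (-b) y := by
    simpa using (hasDerivAt_id y).const_mul (-b)
  have h2 : HasDerivAt (fun x : ℝ => Real.exp (-b * x)) (Real.exp (-b * y) * -b) y := h0.exp
  exact (h1.mul h2).const_mul C

lemma gaux_abs_le (C a b : ℝ) (hb : 0 ≤ b) {y : ℝ} (hy : 0 < y) :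
    |gaux C a b y| ≤ |C| * y ^ a := by
  have h1 : Real.exp (-b * y) ≤ 1 := by
    rw [Real.exp_le_one_iff]
    nlinarith
  have h2 : (0:ℝ) ≤ y ^ a := Real.rpow_nonneg hy.le a
  have h3 : (0:ℝ) < Real.exp (-b * y) := Real.exp_pos _
  rw [gaux, abs_mul, abs_mul, abs_of_nonneg h2, abs_of_nonneg h3.le]
  have : y ^ a * Real.exp (-b * y) ≤ y ^ a * 1 := by
    gcongr
  nlinarith [abs_nonneg C, mul_nonneg (abs_nonneg C) h2]

/-- domination lemma for integrability on `(0,∞)` of compactly supported functions with an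
`rpow` bound near zero. -/
lemma integrableOn_of_rpow_bound {φ : ℝ → ℝ} {M c s : ℝ} (hM : 0 < M) (hs : -1 < s)
    (hmeas : AEStronglyMeasurable φ (volume.restrict (Set.Ioi 0)))
    (hbd : ∀ y : ℝ, 0 < y → |φ y| ≤ c * y ^ s)
    (hzero : ∀ y : ℝ, M < y → φ y = 0) :
    IntegrableOn φ (Set.Ioi 0) := by
  have hψ0 : IntegrableOn (fun y : ℝ => c * y ^ s) (Set.Ioo 0 (M + 1)) :=
    ((intervalIntegral.integrableOn_Ioo_rpow_iff (by linarith)).2 hs).const_mul c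
  have hψ : Integrable ((Set.Ioo 0 (M + 1)).indicator fun y : ℝ => c * y ^ s)
      (volume.restrict (Set.Ioi 0)) :=
    ((integrable_indicator_iff measurableSet_Ioo).2 hψ0).restrict
  refine Integrable.mono hψ hmeas ?_
  filter_upwards [ae_restrict_mem measurableSet_Ioi] with y hy
  rcases lt_or_ge y (M + 1) with h | h
  · have hmem : y ∈ Set.Ioo 0 (M + 1) := ⟨hy, h⟩
    rw [Set.indicator_of_mem hmem, Real.norm_eq_abs, Real.norm_eq_abs]
    exact (hbd y hy).trans (le_abs_self _)
  · rw [hzero y (by linarith), Real.norm_eq_abs, abs_zero]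
    exact norm_nonneg _

/-- the elementary integral `∫_0^∞ e^{-bh} dh = 1/b`. -/
lemma integral_exp_neg_mul_Ioi {b : ℝ} (hb : 0 < b) :
    (∫ h in Set.Ioi (0:ℝ), Real.exp (-b * h)) = 1 / b := by
  have hder : ∀ h ∈ Set.Ici (0:ℝ),
      HasDerivAt (fun t : ℝ => -(1 / b) * Real.exp (-b * t)) (Real.exp (-b * h)) h := by
    intro h _
    have h0 : HasDerivAt (fun t : ℝ => -b * t) (-b) h := by
      simpa using (hasDerivAt_id h).const_mul (-b)
    have := (h0.exp).const_mul (-(1 / b))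
    rw [show Real.exp (-b * h) = -(1 / b) * (Real.exp (-b * h) * -b) by
      rw [show -(1 / b) * (Real.exp (-b * h) * -b) = Real.exp (-b * h) * (b / b) by ring,
        div_self hb.ne', mul_one]]
    exact this
  have htend : Tendsto (fun t : ℝ => -(1 / b) * Real.exp (-b * t)) atTop (𝓝 0) := by
    have h1 : Tendsto (fun t : ℝ => -b * t) atTop atBot :=
      Tendsto.const_mul_atTop_of_neg (by linarith) tendsto_id
    have h2 : Tendsto (fun t : ℝ => Real.exp (-b * t)) atTop (𝓝 0) :=
      Real.tendsto_exp_atBot.comp h1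
    have := h2.const_mul (-(1 / b))
    simpa using this
  have := integral_Ioi_of_hasDerivAt_of_tendsto' hder (exp_neg_integrableOn_Ioi 0 hb) htend
  rw [this]
  simp

/-- Density of the Gamma distribution with shape `k/d0` and rate `b`. -/
noncomputable def gammaDens (k d0 b : ℝ) (y : ℝ) : ℝ :=
  b ^ (k / d0) * y ^ (k / d0 - 1) * exp (-b * y) / Real.Gamma (k / d0)

/-- The Gamma(k/d₀, b) distribution is stationary for the mRNA marginal of the
one-gene bursty PDMP with constant burst frequency `k`, burst size `Exp(b)`
and decay rate `d₀`: the generator integrates to zero against its density. -/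
theorem gamma_stationary_one_gene (k d0 b : ℝ)
    (hk : 0 < k) (hd0 : 0 < d0) (hb : 0 < b) :
    ∀ f : ℝ → ℝ, ContDiff ℝ (⊤ : ℕ∞) f → HasCompactSupport f →
      Function.support f ⊆ Set.Ioi 0 →
      ∫ y in Set.Ioi (0:ℝ),
        (-d0 * y * deriv f y +
          k * ∫ h in Set.Ioi (0:ℝ), (f (y + h) - f y) * (b * exp (-b * h)))
        * gammaDens k d0 b y = 0 := by
  intro f hCf hKs hSupp
  obtain ⟨M, hM, hMf'⟩ := hKs.exists_pos_le_norm
  set α := k / d0 with hα_def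
  have hα : 0 < α := div_pos hk hd0
  have hΓ : 0 < Real.Gamma α := Real.Gamma_pos_of_pos hα
  set C := b ^ α / Real.Gamma α with hC_def
  have hC : 0 < C := div_pos (Real.rpow_pos_of_pos hb α) hΓ
  have hkα : k = d0 * α := by rw [hα_def]; field_simp
  set g : ℝ → ℝ := gaux C (α - 1) b with hg_def
  set w : ℝ → ℝ := gaux (d0 * C) α b with hw_def
  set W' : ℝ → ℝ := fun y =>
    d0 * C * (α * y ^ (α - 1) * Real.exp (-b * y) + y ^ α * (Real.exp (-b * y) * -b))
    with hW_def
  have hgd : ∀ y : ℝ, gammaDens k d0 b y = g y := by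
    intro y
    rw [hg_def, gammaDens, gaux, hC_def, ← hα_def]
    ring
  -- basic facts about f
  have hcont : Continuous f := hCf.continuous
  have hf0 : ∀ x : ℝ, x ≤ 0 → f x = 0 := by
    intro x hx
    by_contra h
    have : x ∈ Set.Ioi (0:ℝ) := hSupp h
    simp only [Set.mem_Ioi] at this
    linarith
  have hfM : ∀ x : ℝ, M ≤ x → f x = 0 := fun x hx =>
    hMf' x (by rw [Real.norm_eq_abs]; exact hx.trans (le_abs_self x))
  have htsupp : tsupport f ⊆ Set.Icc 0 M := by
    refine closure_minimal ?_ isClosed_Icc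
    intro x hx
    refine ⟨(hSupp hx).le, ?_⟩
    by_contra h
    exact hx (hfM x (by linarith))
  have hdfM : ∀ x : ℝ, M < x → deriv f x = 0 := by
    intro x hx
    by_contra h
    have := htsupp (support_deriv_subset (show x ∈ Function.support (deriv f) from h))
    have := this.2
    linarith
  have hdcont : Continuous (deriv f) := hCf.continuous_deriv (by simp)
  obtain ⟨Kf, hKfb⟩ := hKs.exists_bound_of_continuous hcont
  have hKf0 : 0 ≤ Kf := le_trans (norm_nonneg (f 0)) (hKfb 0)
  obtain ⟨Kd, hKdb⟩ := (hKs.deriv).exists_bound_of_continuous hdcont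
  obtain ⟨L, hLip⟩ := ContDiff.lipschitzWith_of_hasCompactSupport hKs hCf (by simp)
  have hfy : ∀ y : ℝ, 0 < y → |f y| ≤ (L : ℝ) * y := by
    intro y hy
    have h := hLip.dist_le_mul y 0
    rw [Real.dist_eq, Real.dist_eq, hf0 0 le_rfl, sub_zero, sub_zero, abs_of_pos hy] at h
    exact h
  have hrpow_add : ∀ y : ℝ, 0 < y → y ^ α = y * y ^ (α - 1) := by
    intro y hy
    have h := Real.rpow_add hy 1 (α - 1)
    rw [show (1:ℝ) + (α - 1) = α by ring, Real.rpow_one] at h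
    exact h
  have hgb : ∀ y : ℝ, 0 < y → |g y| ≤ C * y ^ (α - 1) := by
    intro y hy
    have := gaux_abs_le C (α - 1) b hb.le hy
    rwa [abs_of_pos hC] at this
  have hgnn : ∀ y : ℝ, 0 < y → 0 ≤ g y := by
    intro y hy
    rw [hg_def, gaux]
    positivity
  -- integrability of the atoms
  have intDW : IntegrableOn (fun y => deriv f y * w y) (Set.Ioi 0) := by
    have hwc : Continuous w := gaux_continuous _ _ _ hα.le
    have hcs : HasCompactSupport fun y => deriv f y * w y := (hKs.deriv).mul_right
    exact ((hdcont.mul hwc).integrable_of_hasCompactSupport hcs).integrableOn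
  have intFG : IntegrableOn (fun y => f y * g y) (Set.Ioi 0) := by
    refine integrableOn_of_rpow_bound (c := (L : ℝ) * C) (s := α) hM (by linarith) ?_ ?_ ?_
    · exact (hcont.continuousOn.mul (gaux_continuousOn _ _ _)).aestronglyMeasurable
        measurableSet_Ioi
    · intro y hy
      rw [abs_mul]
      calc |f y| * |g y| ≤ ((L : ℝ) * y) * (C * y ^ (α - 1)) :=
            mul_le_mul (hfy y hy) (hgb y hy) (abs_nonneg _) (by positivity)
        _ = ((L : ℝ) * C) * y ^ α := by rw [hrpow_add y hy]; ring
    · intro y hy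
      rw [hfM y (by linarith), zero_mul]
  have intFYG : IntegrableOn (fun y => f y * (y * g y)) (Set.Ioi 0) := by
    refine integrableOn_of_rpow_bound (c := Kf * C) (s := α) hM (by linarith) ?_ ?_ ?_
    · exact (hcont.continuousOn.mul
        (continuousOn_id.mul (gaux_continuousOn _ _ _))).aestronglyMeasurable measurableSet_Ioi
    · intro y hy
      rw [abs_mul, abs_mul, abs_of_pos hy]
      have h1 : |f y| ≤ Kf := by have := hKfb y; rwa [Real.norm_eq_abs] at this
      calc |f y| * (y * |g y|) ≤ Kf * (y * (C * y ^ (α - 1))) := by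
            refine mul_le_mul h1 ?_ (by positivity) hKf0
            exact mul_le_mul_of_nonneg_left (hgb y hy) hy.le
        _ = (Kf * C) * y ^ α := by rw [hrpow_add y hy]; ring
    · intro y hy
      rw [hfM y (by linarith), zero_mul]
  have hWeq : ∀ y : ℝ, 0 < y →
      k * (f y * g y) - d0 * b * (f y * (y * g y)) = f y * W' y := by
    intro y hy
    rw [hW_def, hg_def, gaux]
    simp only
    rw [hrpow_add y hy, hkα]
    ring
  have intFW' : IntegrableOn (fun y => f y * W' y) (Set.Ioi 0) := by
    have hbase : IntegrableOn (fun y => k * (f y * g y) - d0 * b * (f y * (y * g y)))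
        (Set.Ioi 0) := (intFG.const_mul k).sub (intFYG.const_mul (d0 * b))
    refine hbase.congr_fun ?_ measurableSet_Ioi
    intro y hy
    exact hWeq y hy
  -- integration by parts on (0, ∞)
  have hwderiv : ∀ y ∈ Set.Ioi (0:ℝ), HasDerivAt w (W' y) y := by
    intro y hy
    exact gaux_hasDerivAt (d0 * C) α b (ne_of_gt hy)
  have hfderiv : ∀ y ∈ Set.Ioi (0:ℝ),
      HasDerivAt (fun t => f t * w t) (deriv f y * w y + f y * W' y) y := by
    intro y hy
    exact ((hCf.differentiable (by simp) y).hasDerivAt).mul (hwderiv y hy)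
  have hsum_int : IntegrableOn (fun y => deriv f y * w y + f y * W' y) (Set.Ioi 0) :=
    intDW.add intFW'
  have htends : Tendsto (fun y => f y * w y) atTop (𝓝 0) := by
    refine Tendsto.congr' ?_ tendsto_const_nhds
    filter_upwards [eventually_ge_atTop M] with y hy
    rw [hfM y hy, zero_mul]
  have hcontFW : ContinuousWithinAt (fun y => f y * w y) (Set.Ici 0) 0 :=
    ((hcont.mul (gaux_continuous _ _ _ hα.le)).continuousWithinAt)
  have hibp : (∫ y in Set.Ioi (0:ℝ), (deriv f y * w y + f y * W' y)) = 0 := by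
    rw [integral_Ioi_of_hasDerivAt_of_tendsto hcontFW hfderiv hsum_int htends]
    rw [hf0 0 le_rfl, zero_mul, sub_zero]
  rw [integral_add intDW intFW'] at hibp
  set A := ∫ y in Set.Ioi (0:ℝ), f y * g y with hA_def
  set B := ∫ y in Set.Ioi (0:ℝ), f y * (y * g y) with hB_def
  have hFW'val : (∫ y in Set.Ioi (0:ℝ), f y * W' y) = k * A - d0 * b * B := by
    rw [← setIntegral_congr_fun measurableSet_Ioi (fun y hy => hWeq y hy),
      integral_sub (intFG.const_mul k) (intFYG.const_mul (d0 * b)),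
      integral_const_mul, integral_const_mul]
  have hDWval : (∫ y in Set.Ioi (0:ℝ), deriv f y * w y) = -(k * A - d0 * b * B) := by
    rw [← hFW'val]; linarith
  -- the jump term : Fubini
  set F : ℝ → ℝ → ℝ := fun y u =>
    if y < u then f u * (b * Real.exp (-b * (u - y))) * g y else 0 with hF_def
  have hFint : Integrable (Function.uncurry F)
      ((volume.restrict (Set.Ioi 0)).prod (volume.restrict (Set.Ioi 0))) := by
    set ψ : ℝ × ℝ → ℝ := fun p =>
      ((Set.Ioo 0 (M + 1)).indicator (fun y => Kf * b * C * y ^ (α - 1)) p.1) *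
        ((Set.Ioc 0 M).indicator (fun _ => (1:ℝ)) p.2) with hψ_def
    have h1 : Integrable ((Set.Ioo 0 (M + 1)).indicator fun y : ℝ => Kf * b * C * y ^ (α - 1))
        (volume.restrict (Set.Ioi 0)) := by
      refine ((integrable_indicator_iff measurableSet_Ioo).2 ?_).restrict
      exact ((intervalIntegral.integrableOn_Ioo_rpow_iff (by linarith)).2
        (by linarith)).const_mul _
    have h2 : Integrable ((Set.Ioc 0 M).indicator fun _ : ℝ => (1:ℝ))
        (volume.restrict (Set.Ioi 0)) := by
      refine ((integrable_indicator_iff measurableSet_Ioc).2 ?_).restrict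
      exact integrableOn_const measure_Ioc_lt_top.ne
    have hψint : Integrable ψ
        ((volume.restrict (Set.Ioi 0)).prod (volume.restrict (Set.Ioi 0))) :=
      h1.mul_prod h2
    have hFmeas : AEStronglyMeasurable (Function.uncurry F)
        ((volume.restrict (Set.Ioi 0)).prod (volume.restrict (Set.Ioi 0))) := by
      rw [Measure.prod_restrict]
      have heq : Function.uncurry F = fun p : ℝ × ℝ =>
          Set.indicator {q : ℝ × ℝ | q.1 < q.2}
            (fun q => f q.2 * (b * Real.exp (-b * (q.2 - q.1))) * g q.1) p := by
        funext p
        simp only [Function.uncurry, hF_def, Set.indicator_apply, Set.mem_setOf_eq]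
      rw [heq]
      refine AEStronglyMeasurable.indicator ?_
        (isOpen_lt continuous_fst continuous_snd).measurableSet
      refine ContinuousOn.aestronglyMeasurable ?_ (measurableSet_Ioi.prod measurableSet_Ioi)
      refine ContinuousOn.mul ?_ ?_
      · exact ((hcont.comp continuous_snd).mul (continuous_const.mul
          (Real.continuous_exp.comp (continuous_const.mul
            (continuous_snd.sub continuous_fst))))).continuousOn
      · exact (gaux_continuousOn C (α - 1) b).comp continuous_fst.continuousOn
          (fun p hp => hp.1)
    have hae : ∀ᵐ p ∂((volume.restrict (Set.Ioi 0)).prod (volume.restrict (Set.Ioi 0))),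
        p ∈ (Set.Ioi (0:ℝ)) ×ˢ (Set.Ioi (0:ℝ)) := by
      rw [Measure.prod_restrict]
      exact ae_restrict_mem (measurableSet_Ioi.prod measurableSet_Ioi)
    refine Integrable.mono hψint hFmeas ?_
    filter_upwards [hae] with p hp
    obtain ⟨hp1, hp2⟩ := hp
    simp only [Set.mem_Ioi] at hp1 hp2
    by_cases hlt : p.1 < p.2
    · by_cases hfu : f p.2 = 0
      · have : Function.uncurry F p = 0 := by
          simp [Function.uncurry, hF_def, hfu]
        rw [this]
        simpa using norm_nonneg (ψ p)
      · have hu2 : p.2 < M := by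
          by_contra h
          exact hfu (hfM _ (by linarith))
        have hy1 : p.1 ∈ Set.Ioo (0:ℝ) (M + 1) := ⟨hp1, by linarith⟩
        have hu1 : p.2 ∈ Set.Ioc (0:ℝ) M := ⟨hp2, hu2.le⟩
        have hψval : ψ p = Kf * b * C * p.1 ^ (α - 1) := by
          rw [hψ_def]
          simp only
          rw [Set.indicator_of_mem hy1, Set.indicator_of_mem hu1, mul_one]
        have e1 : |f p.2| ≤ Kf := by have := hKfb p.2; rwa [Real.norm_eq_abs] at this
        have e2 : |b * Real.exp (-b * (p.2 - p.1))| ≤ b := by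
          rw [abs_of_pos (by positivity)]
          have : Real.exp (-b * (p.2 - p.1)) ≤ 1 := by
            rw [Real.exp_le_one_iff]
            nlinarith
          nlinarith
        have e3 : |g p.1| ≤ C * p.1 ^ (α - 1) := hgb _ hp1
        have hval : Function.uncurry F p =
            f p.2 * (b * Real.exp (-b * (p.2 - p.1))) * g p.1 := by
          simp [Function.uncurry, hF_def, hlt]
        rw [hval, Real.norm_eq_abs, Real.norm_eq_abs, hψval, abs_mul, abs_mul]
        have hstep : |f p.2| * |b * Real.exp (-b * (p.2 - p.1))| * |g p.1| ≤
            Kf * b * (C * p.1 ^ (α - 1)) :=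
          mul_le_mul (mul_le_mul e1 e2 (abs_nonneg _) hKf0) e3 (abs_nonneg _) (by positivity)
        calc |f p.2| * |b * Real.exp (-b * (p.2 - p.1))| * |g p.1|
            ≤ Kf * b * (C * p.1 ^ (α - 1)) := hstep
          _ = Kf * b * C * p.1 ^ (α - 1) := by ring
          _ ≤ |Kf * b * C * p.1 ^ (α - 1)| := le_abs_self _
    · have : Function.uncurry F p = 0 := by
        simp [Function.uncurry, hF_def, hlt]
      rw [this]
      simpa using norm_nonneg (ψ p)
  have hswap : (∫ y in Set.Ioi (0:ℝ), ∫ u in Set.Ioi (0:ℝ), F y u) =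
      ∫ u in Set.Ioi (0:ℝ), ∫ y in Set.Ioi (0:ℝ), F y u := integral_integral_swap hFint
  have hInner1 : ∀ y ∈ Set.Ioi (0:ℝ), (∫ u in Set.Ioi (0:ℝ), F y u) =
      (∫ u in Set.Ioi y, f u * (b * Real.exp (-b * (u - y)))) * g y := by
    intro y hy
    simp only [Set.mem_Ioi] at hy
    have h1 : ∀ u : ℝ, F y u =
        (Set.Ioi y).indicator (fun u => f u * (b * Real.exp (-b * (u - y))) * g y) u := by
      intro u
      simp only [hF_def, Set.indicator_apply, Set.mem_Ioi]
    rw [setIntegral_congr_fun measurableSet_Ioi (fun u _ => h1 u),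
      setIntegral_indicator measurableSet_Ioi, Set.Ioi_inter_Ioi, max_eq_right hy.le,
      integral_mul_const]
  have hInner2 : ∀ u ∈ Set.Ioi (0:ℝ), (∫ y in Set.Ioi (0:ℝ), F y u) =
      (d0 * b / k) * (f u * (u * g u)) := by
    intro u hu
    simp only [Set.mem_Ioi] at hu
    have h1 : ∀ y : ℝ, F y u =
        (Set.Iio u).indicator (fun y => f u * (b * Real.exp (-b * (u - y))) * g y) y := by
      intro y
      simp only [hF_def, Set.indicator_apply, Set.mem_Iio]
    rw [setIntegral_congr_fun measurableSet_Ioi (fun y _ => h1 y),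
      setIntegral_indicator measurableSet_Iio, Set.Ioi_inter_Iio]
    have h2 : EqOn (fun y => f u * (b * Real.exp (-b * (u - y))) * g y)
        (fun y => (f u * (b * C * Real.exp (-b * u))) * y ^ (α - 1)) (Set.Ioo 0 u) := by
      intro y hy
      simp only [hg_def, gaux]
      rw [show -b * u = -b * (u - y) + -b * y by ring, Real.exp_add]
      ring
    rw [setIntegral_congr_fun measurableSet_Ioo h2, integral_const_mul]
    have h3 : (∫ y in Set.Ioo (0:ℝ) u, y ^ (α - 1)) = u ^ α / α := by
      rw [← integral_Ioc_eq_integral_Ioo, ← intervalIntegral.integral_of_le hu.le,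
        integral_rpow (Or.inl (by linarith)), show α - 1 + 1 = α by ring,
        Real.zero_rpow hα.ne', sub_zero]
    rw [h3, hg_def, gaux, hrpow_add u hu, hkα]
    field_simp
  have hP2int : Integrable (fun y => ∫ u in Set.Ioi (0:ℝ), F y u)
      (volume.restrict (Set.Ioi 0)) := hFint.integral_prod_left
  have hP2val : (∫ y in Set.Ioi (0:ℝ), ∫ u in Set.Ioi (0:ℝ), F y u) = (d0 * b / k) * B := by
    rw [hswap, setIntegral_congr_fun measurableSet_Ioi (fun u hu => hInner2 u hu),
      integral_const_mul, hB_def]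
  -- inner jump integral identity
  have hJ : ∀ y ∈ Set.Ioi (0:ℝ),
      (∫ h in Set.Ioi (0:ℝ), (f (y + h) - f y) * (b * Real.exp (-b * h))) =
      (∫ u in Set.Ioi y, f u * (b * Real.exp (-b * (u - y)))) - f y := by
    intro y hy
    simp only [Set.mem_Ioi] at hy
    have hint1 : Integrable (fun h => f (y + h) * (b * Real.exp (-b * h)))
        (volume.restrict (Set.Ioi 0)) := by
      have hcs0 : HasCompactSupport fun h : ℝ => f (y + h) :=
        hKs.comp_homeomorph (Homeomorph.addLeft y)
      have hcs : HasCompactSupport fun h : ℝ => f (y + h) * (b * Real.exp (-b * h)) :=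
        hcs0.mul_right
      have hc : Continuous fun h : ℝ => f (y + h) * (b * Real.exp (-b * h)) :=
        (hcont.comp (continuous_const.add continuous_id)).mul
          (continuous_const.mul (Real.continuous_exp.comp
            (continuous_const.mul continuous_id)))
      exact (hc.integrable_of_hasCompactSupport hcs).integrableOn
    have hint2 : Integrable (fun h => f y * (b * Real.exp (-b * h)))
        (volume.restrict (Set.Ioi 0)) :=
      (((exp_neg_integrableOn_Ioi 0 hb).const_mul b).const_mul (f y))
    have hsplit : (∫ h in Set.Ioi (0:ℝ), (f (y + h) - f y) * (b * Real.exp (-b * h))) =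
        (∫ h in Set.Ioi (0:ℝ), f (y + h) * (b * Real.exp (-b * h))) -
          ∫ h in Set.Ioi (0:ℝ), f y * (b * Real.exp (-b * h)) := by
      rw [← integral_sub hint1 hint2]
      congr 1
      funext h
      ring
    rw [hsplit]
    have hval2 : (∫ h in Set.Ioi (0:ℝ), f y * (b * Real.exp (-b * h))) = f y := by
      rw [integral_const_mul, integral_const_mul, integral_exp_neg_mul_Ioi hb]
      field_simp
    have htrans : (∫ h in Set.Ioi (0:ℝ), f (y + h) * (b * Real.exp (-b * h))) =
        ∫ u in Set.Ioi y, f u * (b * Real.exp (-b * (u - y))) := by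
      rw [← integral_indicator measurableSet_Ioi, ← integral_indicator measurableSet_Ioi]
      have hpt : ∀ h : ℝ,
          (Set.Ioi (0:ℝ)).indicator (fun h => f (y + h) * (b * Real.exp (-b * h))) h =
          (Set.Ioi y).indicator (fun u => f u * (b * Real.exp (-b * (u - y)))) (y + h) := by
        intro h
        by_cases h0 : 0 < h
        · rw [Set.indicator_of_mem (by exact h0),
            Set.indicator_of_mem (by simp [Set.mem_Ioi]; linarith)]
          simp
        · rw [Set.indicator_of_notMem (by simpa using h0),
            Set.indicator_of_notMem (by simp [Set.mem_Ioi]; linarith [not_lt.1 h0])]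
      calc (∫ h, (Set.Ioi (0:ℝ)).indicator (fun h => f (y + h) * (b * Real.exp (-b * h))) h)
          = ∫ h, (Set.Ioi y).indicator
              (fun u => f u * (b * Real.exp (-b * (u - y)))) (y + h) := by
            congr 1; funext h; exact hpt h
        _ = ∫ u, (Set.Ioi y).indicator (fun u => f u * (b * Real.exp (-b * (u - y)))) u :=
            integral_add_left_eq_self _ y
    rw [hval2, htrans]
  -- putting everything together
  have hmain : EqOn
      (fun y => (-d0 * y * deriv f y +
          k * ∫ h in Set.Ioi (0:ℝ), (f (y + h) - f y) * (b * Real.exp (-b * h)))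
        * gammaDens k d0 b y)
      (fun y => -(deriv f y * w y) +
        (k * (∫ u in Set.Ioi (0:ℝ), F y u) + (-k) * (f y * g y))) (Set.Ioi 0) := by
    intro y hy
    have hy' : (0:ℝ) < y := hy
    simp only
    rw [hgd y, hJ y hy, hInner1 y hy, hg_def, hw_def, gaux, gaux, hrpow_add y hy']
    ring
  have i1 : Integrable (fun y => -(deriv f y * w y)) (volume.restrict (Set.Ioi 0)) :=
    intDW.neg
  have i2 : Integrable (fun y => k * ∫ u in Set.Ioi (0:ℝ), F y u)
      (volume.restrict (Set.Ioi 0)) := hP2int.const_mul k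
  have i3 : Integrable (fun y => -k * (f y * g y)) (volume.restrict (Set.Ioi 0)) :=
    intFG.const_mul (-k)
  have i23 : Integrable (fun y => k * (∫ u in Set.Ioi (0:ℝ), F y u) + -k * (f y * g y))
      (volume.restrict (Set.Ioi 0)) := i2.add i3
  rw [setIntegral_congr_fun measurableSet_Ioi hmain,
    integral_add i1 i23, integral_add i2 i3,
    integral_neg, hDWval, integral_const_mul, hP2val, integral_const_mul, ← hA_def]
  field_simp
  ring
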